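/- Let u ∈ C¹(ℝ²) satisfy u(x + λ²(y-x)/|y-x|²) - 4·ln(|y-x|/λ) ≤ u(y) for all λ > 0, x ∈ ℝ², and y with |y - x| ≥ λ. Then u is constant. -/

import Mathlib

/-!
Inverting `y` in the sphere of radius `√s ‖y - X‖` about `X` gives `X + s • (y - X)`, and the
logarithmic penalty of that inversion is `-(c / 2) log s`. Every `x ≠ y` is such an image for every
`s ∈ (0, 1)`, with centre `X` on the line through `x` and `y` beyond `x`. Hence
`u x ≤ u y - (c / 2) log s`, and letting `s → 1` gives `u x ≤ u y`; by symmetry `u` is constant.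
-/

open Real Filter Topology

variable {E : Type*} [NormedAddCommGroup E] [NormedSpace ℝ E] {u : E → ℝ} {c : ℝ}

def InversionBound (c : ℝ) (u : E → ℝ) : Prop :=
  ∀ lam : ℝ, ∀ x y : E, 0 < lam → lam ≤ ‖y - x‖ →
    u (x + (lam ^ 2 / ‖y - x‖ ^ 2) • (y - x)) - c * log (‖y - x‖ / lam) ≤ u y

lemma apply_add_smul_le_of_inversion (h : InversionBound c u)
    {X y : E} (hy : y ≠ X) {s : ℝ} (hs₀ : 0 < s) (hs₁ : s ≤ 1) :
    u (X + s • (y - X)) ≤ u y - c / 2 * log s := by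
  have hd : 0 < ‖y - X‖ := norm_sub_pos_iff.mpr hy
  have hsqrt : 0 < √s := sqrt_pos.mpr hs₀
  have hlam_le : √s * ‖y - X‖ ≤ ‖y - X‖ :=
    mul_le_of_le_one_left hd.le (sqrt_le_one.mpr hs₁)
  have hratio : (√s * ‖y - X‖) ^ 2 / ‖y - X‖ ^ 2 = s := by
    rw [mul_pow, sq_sqrt hs₀.le]
    field_simp
  have hlog : log (‖y - X‖ / (√s * ‖y - X‖)) = -(log s / 2) := by
    rw [div_mul_cancel_right₀ hd.ne', log_inv, log_sqrt hs₀.le]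
  have := h (√s * ‖y - X‖) X y (mul_pos hsqrt hd) hlam_le
  rw [hratio, hlog] at this
  linarith

lemma apply_le_sub_log_of_inversion (h : InversionBound c u)
    {x y : E} (hxy : x ≠ y) {s : ℝ} (hs₀ : 0 < s) (hs₁ : s < 1) :
    u x ≤ u y - c / 2 * log s := by
  have hs : 1 - s ≠ 0 := sub_ne_zero.mpr hs₁.ne'
  set X : E := (1 - s)⁻¹ • (x - s • y)
  have hyX : y - X = (1 - s)⁻¹ • (y - x) := by
    simp only [X]
    match_scalars <;> field_simp
    ring
  have hX : X + s • (y - X) = x := by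
    rw [hyX]
    simp only [X]
    match_scalars <;> field_simp <;> ring
  have hy : y ≠ X := by
    rw [← sub_ne_zero, hyX]
    exact smul_ne_zero (inv_ne_zero hs) (sub_ne_zero.mpr hxy.symm)
  simpa only [hX] using apply_add_smul_le_of_inversion h hy hs₀ hs₁.le

lemma apply_le_of_inversion (h : InversionBound c u) (x y : E) : u x ≤ u y := by
  rcases eq_or_ne x y with rfl | hxy
  · exact le_rfl
  have hlim : Tendsto (fun s => u y - c / 2 * log s) (𝓝[<] 1) (𝓝 (u y)) := by
    have := ((continuousAt_log one_ne_zero).tendsto.const_mul (c / 2)).const_sub (u y)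
    simpa using this.mono_left nhdsWithin_le_nhds
  refine ge_of_tendsto hlim ?_
  filter_upwards [Ioo_mem_nhdsLT zero_lt_one] with s hs
  exact apply_le_sub_log_of_inversion h hxy hs.1 hs.2

theorem stmt3 (u : EuclideanSpace ℝ (Fin 2) → ℝ)
    (h : ∀ lam : ℝ, ∀ x y : EuclideanSpace ℝ (Fin 2), 0 < lam → lam ≤ ‖y - x‖ →
      u (x + (lam ^ 2 / ‖y - x‖ ^ 2) • (y - x)) - 4 * Real.log (‖y - x‖ / lam) ≤ u y) :
    ∀ x y : EuclideanSpace ℝ (Fin 2), u x = u y :=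
  fun x y => le_antisymm (apply_le_of_inversion h x y) (apply_le_of_inversion h y x)
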